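/- Fix an integer N ≥ 1 and let ℂ^{N²} have orthonormal basis |m,n⟩ with m, n ∈ ℤ/Nℤ. Define unitaries U and V by U|m,n⟩ = U_x(m,n)|m+1,n⟩ and V|m,n⟩ = e^{2πi m/N²}|m,n+1⟩, where (for representatives 0 ≤ m,n ≤ N−1) U_x(m,n) = 1 if m ≠ N−1 and U_x(N−1,n) = e^{−2πi n/N}, and all index arithmetic is modulo N. Then V† U† V U = e^{2πi/N²} · I. -/
import Mathlib


open scoped Matrix

/-- The transport phase `U_x(m,n)`: equal to `1` unless `m = N-1`, where it equals
`exp(-2πi n/N)`. -/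
noncomputable def Uxphase (N : ℕ) (m n : ZMod N) : ℂ :=
  if m.val = N - 1 then Complex.exp (-(2 * Real.pi * Complex.I * n.val / N)) else 1

/-- The unitary `U` with `U|m,n⟩ = U_x(m,n)|m+1,n⟩`. -/
noncomputable def Umat (N : ℕ) : Matrix (ZMod N × ZMod N) (ZMod N × ZMod N) ℂ :=
  Matrix.of fun p q => if p = (q.1 + 1, q.2) then Uxphase N q.1 q.2 else 0

/-- The unitary `V` with `V|m,n⟩ = e^{2πi m/N²}|m,n+1⟩`. -/
noncomputable def Vmat (N : ℕ) : Matrix (ZMod N × ZMod N) (ZMod N × ZMod N) ℂ :=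
  Matrix.of fun p q =>
    if p = (q.1, q.2 + 1) then Complex.exp (2 * Real.pi * Complex.I * q.1.val / (N ^ 2)) else 0

lemma star_exp_aux (c : ℕ) (d : ℂ) (hd : (starRingEnd ℂ) d = d) :
    star (Complex.exp (2 * Real.pi * Complex.I * c / d)) =
      Complex.exp (-(2 * Real.pi * Complex.I * c / d)) := by
  rw [Complex.star_def, ← Complex.exp_conj]
  congr 1
  simp [map_div₀, map_ofNat, hd]
  ring

lemma star_Ux (N : ℕ) (m k : ZMod N) :
    star (Uxphase N m k) =
      if m.val = N - 1 then Complex.exp (2 * Real.pi * Complex.I * k.val / N) else 1 := by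
  unfold Uxphase
  split_ifs
  · rw [Complex.star_def, ← Complex.exp_conj]
    congr 1
    simp [map_div₀, map_ofNat]
    ring
  · exact star_one ℂ

lemma key (N : ℕ) [NeZero N] (m n : ZMod N) :
    star (Complex.exp (2 * Real.pi * Complex.I * m.val / (N:ℂ) ^ 2)) *
      (star (Uxphase N m (n + 1)) *
        (Complex.exp (2 * Real.pi * Complex.I * ((m + 1).val : ℕ) / (N:ℂ) ^ 2) * Uxphase N m n))
      = Complex.exp (2 * Real.pi * Complex.I / (N:ℂ) ^ 2) := by
  have hN : 0 < N := Nat.pos_of_ne_zero (NeZero.ne N)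
  have hNc : (N:ℂ) ≠ 0 := Nat.cast_ne_zero.mpr (NeZero.ne N)
  have hval1 : (1 : ZMod N).val = 1 % N := ZMod.val_one_eq_one_mod N
  have hm1 : (m + 1).val = (m.val + 1) % N := by
    rw [ZMod.val_add, hval1]
    conv_rhs => rw [Nat.add_mod]
    simp
  have hN1 : 1 ≤ N := hN
  rw [star_exp_aux _ ((N:ℂ)^2) (by simp), star_Ux]
  unfold Uxphase
  by_cases hm : m.val = N - 1
  · have hm1' : (m + 1).val = 0 := by
      rw [hm1, hm]
      have h : N - 1 + 1 = N := by omega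
      rw [h, Nat.mod_self]
    have hn1 : (n + 1).val = (n.val + 1) % N := by
      rw [ZMod.val_add, hval1]
      conv_rhs => rw [Nat.add_mod]
      simp
    rw [if_pos hm, if_pos hm, hm1', hm]
    by_cases hn : n.val = N - 1
    · have hn1' : (n + 1).val = 0 := by
        rw [hn1, hn]
        have h : N - 1 + 1 = N := by omega
        rw [h, Nat.mod_self]
      rw [hn1', hn]
      rw [← Complex.exp_add, ← Complex.exp_add, ← Complex.exp_add]
      rw [show -(2 * ↑Real.pi * Complex.I * ((N:ℕ) - 1 : ℕ) / (N:ℂ) ^ 2) +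
          (2 * ↑Real.pi * Complex.I * ((0:ℕ):ℂ) / (N:ℂ)
            + (2 * ↑Real.pi * Complex.I * ((0:ℕ):ℂ) / (N:ℂ) ^ 2
              + -(2 * ↑Real.pi * Complex.I * ((N:ℕ) - 1 : ℕ) / (N:ℂ))))
          = 2 * ↑Real.pi * Complex.I / (N:ℂ) ^ 2 + (-1 : ℤ) * (2 * ↑Real.pi * Complex.I) by
        push_cast [Nat.cast_sub hN1]
        field_simp
        ring]
      rw [Complex.exp_add, Complex.exp_int_mul_two_pi_mul_I, mul_one]
    · have hn1' : (n + 1).val = n.val + 1 := by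
        rw [hn1]
        have := ZMod.val_lt n
        exact Nat.mod_eq_of_lt (by omega)
      rw [hn1']
      rw [← Complex.exp_add, ← Complex.exp_add, ← Complex.exp_add]
      congr 1
      push_cast [Nat.cast_sub hN1]
      field_simp
      ring
  · have hm1' : (m + 1).val = m.val + 1 := by
      rw [hm1]
      have := ZMod.val_lt m
      exact Nat.mod_eq_of_lt (by omega)
    rw [if_neg hm, if_neg hm, hm1', one_mul, mul_one]
    rw [← Complex.exp_add]
    congr 1
    push_cast
    field_simp
    ring


theorem stmt13 (N : ℕ) [NeZero N] :
    (Vmat N)ᴴ * (Umat N)ᴴ * Vmat N * Umat N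
      = Complex.exp (2 * Real.pi * Complex.I / (N ^ 2)) • (1 : Matrix (ZMod N × ZMod N) (ZMod N × ZMod N) ℂ) := by
  rw [mul_assoc, mul_assoc]
  ext p q
  simp only [Matrix.mul_apply, Matrix.conjTranspose_apply, Umat, Vmat, Matrix.of_apply,
    mul_ite, ite_mul, zero_mul, mul_zero, apply_ite (starRingEnd ℂ), map_zero, Finset.mul_sum,
    Finset.sum_ite_eq, Finset.sum_ite_eq', Finset.mem_univ, if_true, Prod.mk.injEq, add_left_inj,
    Matrix.smul_apply, Matrix.one_apply, smul_eq_mul]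
  rw [Finset.sum_eq_single ((p.1, p.2 + 1) : ZMod N × ZMod N)]
  · rw [if_pos rfl]
    by_cases hpq : q = p
    · subst hpq
      rw [if_pos ⟨rfl, rfl⟩, if_pos rfl, mul_one]
      exact key N q.1 q.2
    · rw [if_neg (by simp [Prod.ext_iff] at hpq ⊢; tauto), if_neg (fun h => hpq h.symm)]
      simp
  · intro x _ hx; rw [if_neg hx]; simp
  · intro h; exact absurd (Finset.mem_univ _) h
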